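/- arXiv:1306.0080 — 2 statements merged into one kernel-verified Lean document; each statement's English description precedes it below -/
import Mathlib

section
/- Fix L > 0, ℓ > 0 and m a positive natural number. The function u(x₁, x₂) = x₂ sin(mπx₁/L) satisfies Δ²u = λu with λ = m⁴π⁴/L⁴, and additionally u(0, x₂) = u(L, x₂) = u_{x₁x₁}(0, x₂) = u_{x₁x₁}(L, x₂) = 0, u_{x₂x₂} ≡ 0, u_{x₂}(x₁, −ℓ) = u_{x₂}(x₁, ℓ), and 2ℓ·u_{x₂}(x₁, ℓ) = u(x₁, ℓ) − u(x₁, −ℓ) for all x₁. -/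
/-- First partial derivative with respect to the first variable. -/
noncomputable def pd1 (u : ℝ → ℝ → ℝ) : ℝ → ℝ → ℝ := fun a b => deriv (fun x => u x b) a

/-- First partial derivative with respect to the second variable. -/
noncomputable def pd2 (u : ℝ → ℝ → ℝ) : ℝ → ℝ → ℝ := fun a b => deriv (fun y => u a y) b

/-- The planar biharmonic operator Δ²u = u_{x₁x₁x₁x₁} + 2u_{x₁x₁x₂x₂} + u_{x₂x₂x₂x₂}. -/
noncomputable def biharm (u : ℝ → ℝ → ℝ) : ℝ → ℝ → ℝ := fun a b =>
  pd1 (pd1 (pd1 (pd1 u))) a b + 2 * pd2 (pd2 (pd1 (pd1 u))) a b + pd2 (pd2 (pd2 (pd2 u))) a b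

lemma d_sin (b c : ℝ) : deriv (fun x => b * Real.sin (c * x)) = fun x => (b * c) * Real.cos (c * x) := by
  funext x
  have h1 : HasDerivAt (fun x : ℝ => c * x) c x := by
    simpa using (hasDerivAt_id x).const_mul c
  have h2 := ((Real.hasDerivAt_sin (c * x)).comp x h1).const_mul b
  simpa [mul_comm, mul_assoc, mul_left_comm, Function.comp] using h2.deriv

lemma d_cos (b c : ℝ) : deriv (fun x => b * Real.cos (c * x)) = fun x => (-(b * c)) * Real.sin (c * x) := by
  funext x
  have h1 : HasDerivAt (fun x : ℝ => c * x) c x := by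
    simpa using (hasDerivAt_id x).const_mul c
  have h2 := ((Real.hasDerivAt_cos (c * x)).comp x h1).const_mul b
  have := h2.deriv
  simp only [Function.comp] at this
  rw [this]; ring

lemma d_lin (k y : ℝ) : deriv (fun y : ℝ => y * k) y = k := by
  simpa using (hasDerivAt_mul_const k (x := y)).deriv

theorem stmt9 (L ℓ : ℝ) (hL : 0 < L) (hℓ : 0 < ℓ) (m : ℕ) (hm : 0 < m) :
    (∀ a b : ℝ,
      biharm (fun x₁ x₂ => x₂ * Real.sin ((m : ℝ) * Real.pi * x₁ / L)) a b =
        ((m : ℝ) ^ 4 * Real.pi ^ 4 / L ^ 4) * (b * Real.sin ((m : ℝ) * Real.pi * a / L))) ∧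
    (∀ b : ℝ, b * Real.sin ((m : ℝ) * Real.pi * 0 / L) = 0 ∧
      b * Real.sin ((m : ℝ) * Real.pi * L / L) = 0 ∧
      pd1 (pd1 (fun x₁ x₂ => x₂ * Real.sin ((m : ℝ) * Real.pi * x₁ / L))) 0 b = 0 ∧
      pd1 (pd1 (fun x₁ x₂ => x₂ * Real.sin ((m : ℝ) * Real.pi * x₁ / L))) L b = 0) ∧
    (∀ a b : ℝ, pd2 (pd2 (fun x₁ x₂ => x₂ * Real.sin ((m : ℝ) * Real.pi * x₁ / L))) a b = 0) ∧
    (∀ a : ℝ, pd2 (fun x₁ x₂ => x₂ * Real.sin ((m : ℝ) * Real.pi * x₁ / L)) a (-ℓ) =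
      pd2 (fun x₁ x₂ => x₂ * Real.sin ((m : ℝ) * Real.pi * x₁ / L)) a ℓ) ∧
    (∀ a : ℝ, 2 * ℓ * pd2 (fun x₁ x₂ => x₂ * Real.sin ((m : ℝ) * Real.pi * x₁ / L)) a ℓ =
      ℓ * Real.sin ((m : ℝ) * Real.pi * a / L) - (-ℓ) * Real.sin ((m : ℝ) * Real.pi * a / L)) := by
  set c : ℝ := (m : ℝ) * Real.pi / L with hc
  set u : ℝ → ℝ → ℝ := fun x₁ x₂ => x₂ * Real.sin ((m : ℝ) * Real.pi * x₁ / L) with hu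
  have harg : ∀ x : ℝ, (m : ℝ) * Real.pi * x / L = c * x := by
    intro x; rw [hc]; ring
  -- pd1 u a b = (b*c) * cos (c*a)
  have hpd1 : ∀ a b : ℝ, pd1 u a b = (b * c) * Real.cos (c * a) := by
    intro a b
    have : (fun x => u x b) = fun x => b * Real.sin (c * x) := by
      funext x; simp [hu, harg x]
    rw [pd1, this, d_sin]
  have hpd11 : ∀ a b : ℝ, pd1 (pd1 u) a b = (-(b * c * c)) * Real.sin (c * a) := by
    intro a b
    have : (fun x => pd1 u x b) = fun x => (b * c) * Real.cos (c * x) := by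
      funext x; rw [hpd1]
    rw [pd1, this, d_cos]
  have hpd1111 : ∀ a b : ℝ, pd1 (pd1 (pd1 (pd1 u))) a b = (b * c^4) * Real.sin (c * a) := by
    intro a b
    have h3 : ∀ a b : ℝ, pd1 (pd1 (pd1 u)) a b = (-(b * c * c * c)) * Real.cos (c * a) := by
      intro a b
      have : (fun x => pd1 (pd1 u) x b) = fun x => (-(b * c * c)) * Real.sin (c * x) := by
        funext x; rw [hpd11]
      rw [pd1, this, d_sin]; beta_reduce; ring
    have : (fun x => pd1 (pd1 (pd1 u)) x b) = fun x => (-(b * c * c * c)) * Real.cos (c * x) := by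
      funext x; rw [h3]
    rw [pd1, this, d_cos]; beta_reduce; ring
  have hpd2 : ∀ a b : ℝ, pd2 u a b = Real.sin (c * a) := by
    intro a b
    have : (fun y => u a y) = fun y => y * Real.sin (c * a) := by
      funext y; simp [hu, harg a]
    rw [pd2, this, d_lin]
  have hpd22 : ∀ a b : ℝ, pd2 (pd2 u) a b = 0 := by
    intro a b
    have : (fun y => pd2 u a y) = fun _ => Real.sin (c * a) := by
      funext y; rw [hpd2]
    rw [pd2, this, deriv_const]
  have hpd2211 : ∀ a b : ℝ, pd2 (pd2 (pd1 (pd1 u))) a b = 0 := by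
    intro a b
    have h1 : ∀ a b : ℝ, pd2 (pd1 (pd1 u)) a b = (-(c * c)) * Real.sin (c * a) := by
      intro a b
      have : (fun y => pd1 (pd1 u) a y) = fun y => y * ((-(c * c)) * Real.sin (c * a)) := by
        funext y; rw [hpd11]; ring
      rw [pd2, this, d_lin]
    have : (fun y => pd2 (pd1 (pd1 u)) a y) = fun _ => (-(c * c)) * Real.sin (c * a) := by
      funext y; rw [h1]
    rw [pd2, this, deriv_const]
  have hpd2222 : ∀ a b : ℝ, pd2 (pd2 (pd2 (pd2 u))) a b = 0 := by
    intro a b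
    have h2 : ∀ a b : ℝ, pd2 (pd2 (pd2 u)) a b = 0 := by
      intro a b
      have h1 : (fun y => pd2 (pd2 u) a y) = fun _ : ℝ => (0 : ℝ) := by
        funext y; rw [hpd22]
      rw [pd2, h1, deriv_const]
    have : (fun y => pd2 (pd2 (pd2 u)) a y) = fun _ : ℝ => (0 : ℝ) := by
      funext y; rw [h2]
    rw [pd2, this, deriv_const]
  have hsinL : Real.sin (c * L) = 0 := by
    have : c * L = (m : ℝ) * Real.pi := by
      rw [hc]; field_simp
    rw [this, Real.sin_nat_mul_pi]
  refine ⟨?_, ?_, ?_, ?_, ?_⟩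
  · intro a b
    rw [biharm, hpd1111, hpd2211, hpd2222]
    rw [harg a, hc]
    ring
  · intro b
    refine ⟨by simp, ?_, ?_, ?_⟩
    · rw [harg L, hsinL, mul_zero]
    · rw [hpd11]; simp
    · rw [hpd11, hsinL, mul_zero]
  · intro a b; exact hpd22 a b
  · intro a; rw [hpd2, hpd2]
  · intro a; rw [hpd2, harg a]; ring
end

section
/- For every positive integer m, both functions u₁(x₁, x₂) = sin(mπx₁/L) and u₂(x₁, x₂) = x₂ sin(mπx₁/L) satisfy Δ²u = (m⁴π⁴/L⁴)·u together with the boundary conditions u = u_{x₁x₁} = 0 on x₁ ∈ {0, L} and u_{x₂x₂} = u_{x₂x₂x₂} = 0 everywhere; in particular the eigenvalue m⁴π⁴/L⁴ of problem (eigen2) has at least two linearly independent eigenfunctions. -/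
open Real Set

section Separable

variable (f g : ℝ → ℝ)

theorem pd1_mul_sep : pd1 (fun a b => g b * f a) = fun a b => g b * deriv f a := by
  funext a b; exact deriv_const_mul_field (g b)

theorem pd2_mul_sep : pd2 (fun a b => g b * f a) = fun a b => deriv g b * f a := by
  funext a b; exact deriv_mul_const_field (f a)

theorem biharm_mul_sep : biharm (fun a b => g b * f a) = fun a b =>
    g b * iteratedDeriv 4 f a + 2 * (iteratedDeriv 2 g b * iteratedDeriv 2 f a) +
      iteratedDeriv 4 g b * f a := by
  funext a b
  simp only [biharm, pd1_mul_sep, pd2_mul_sep, iteratedDeriv_succ, iteratedDeriv_zero]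

end Separable

theorem iteratedDeriv_eq_zero_of_le {g : ℝ → ℝ} {k n : ℕ} (hg : iteratedDeriv k g = 0)
    (hkn : k ≤ n) : iteratedDeriv n g = 0 := by
  induction n, hkn using Nat.le_induction with
  | base => exact hg
  | succ n _ ih => rw [iteratedDeriv_succ, ih]; exact deriv_const' 0

theorem iteratedDeriv_two_affine (p q : ℝ) : iteratedDeriv 2 (fun y => p * y + q) = 0 := by
  funext y; simp [iteratedDeriv_succ]

theorem iteratedDeriv_two_mul_sin_const_mul (k : ℕ) (c : ℝ) :
    iteratedDeriv (2 * k) (fun x => sin (c * x)) = fun x => (-c ^ 2) ^ k * sin (c * x) := by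
  rw [iteratedDeriv_comp_const_mul contDiff_sin, iteratedDeriv_even_sin]
  funext x; simp only [Pi.mul_apply, Pi.pow_apply, Pi.neg_apply, Pi.one_apply]; ring

section AffineTimesSine

variable (p q c : ℝ)

theorem biharm_affine_mul_sin (a b : ℝ) :
    biharm (fun a b => (p * b + q) * sin (c * a)) a b = c ^ 4 * ((p * b + q) * sin (c * a)) := by
  have h4 : iteratedDeriv 4 (fun y => p * y + q) = 0 :=
    iteratedDeriv_eq_zero_of_le (iteratedDeriv_two_affine p q) (by norm_num)
  have hsin : iteratedDeriv 4 (fun x => sin (c * x)) = fun x => c ^ 4 * sin (c * x) := by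
    rw [show 4 = 2 * 2 from rfl, iteratedDeriv_two_mul_sin_const_mul]
    funext x; ring
  rw [biharm_mul_sep, iteratedDeriv_two_affine, h4, hsin]
  simp only [Pi.zero_apply]; ring

theorem pd1_pd1_affine_mul_sin :
    pd1 (pd1 (fun a b => (p * b + q) * sin (c * a))) =
      fun a b => (p * b + q) * (-c ^ 2 * sin (c * a)) := by
  have hsin := iteratedDeriv_two_mul_sin_const_mul 1 c
  simp only [mul_one, pow_one, iteratedDeriv_succ, iteratedDeriv_zero] at hsin
  rw [pd1_mul_sep, pd1_mul_sep, hsin]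

theorem pd2_pd2_affine_mul_sin : pd2 (pd2 (fun a b => (p * b + q) * sin (c * a))) = 0 := by
  have h2 := iteratedDeriv_two_affine p q
  simp only [iteratedDeriv_succ, iteratedDeriv_zero] at h2
  rw [pd2_mul_sep, pd2_mul_sep, h2]
  funext a b; simp

end AffineTimesSine

/-- Problem (eigen2) with eigenvalue `μ`, its conditions imposed on all of `ℝ²`. -/
def SolvesEigen2 (L μ : ℝ) (u : ℝ → ℝ → ℝ) : Prop :=
  (∀ a b : ℝ, biharm u a b = μ * u a b) ∧
    (∀ b : ℝ, u 0 b = 0 ∧ u L b = 0 ∧ pd1 (pd1 u) 0 b = 0 ∧ pd1 (pd1 u) L b = 0) ∧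
    (∀ a b : ℝ, pd2 (pd2 u) a b = 0 ∧ pd2 (pd2 (pd2 u)) a b = 0)

theorem sin_nat_mul_pi_div_mul_self (m : ℕ) (L : ℝ) : sin ((m : ℝ) * π / L * L) = 0 := by
  rcases eq_or_ne L 0 with rfl | hL
  · simp
  · rw [div_mul_cancel₀ _ hL, sin_nat_mul_pi]

theorem solvesEigen2_affine_mul_sin (L p q : ℝ) (m : ℕ) :
    SolvesEigen2 L ((m : ℝ) ^ 4 * π ^ 4 / L ^ 4)
      (fun a b => (p * b + q) * sin ((m : ℝ) * π * a / L)) := by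
  set c := (m : ℝ) * π / L
  have hu : (fun a b => (p * b + q) * sin ((m : ℝ) * π * a / L)) =
      fun a b => (p * b + q) * sin (c * a) := by
    simp only [c, mul_div_right_comm]
  have hc : (m : ℝ) ^ 4 * π ^ 4 / L ^ 4 = c ^ 4 := by rw [div_pow, mul_pow]
  rw [hu, hc]
  refine ⟨biharm_affine_mul_sin p q c, fun b => ?_, fun a b => ?_⟩
  · simp [pd1_pd1_affine_mul_sin, c, sin_nat_mul_pi_div_mul_self]
  · rw [pd2_pd2_affine_mul_sin]; exact ⟨rfl, deriv_const b 0⟩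

theorem not_forall_mul_eq_const_mul {ℓ s : ℝ} (hℓ : 0 < ℓ) (hs : s ≠ 0) (c : ℝ) :
    ¬ ∀ b ∈ Ioo (-ℓ) ℓ, b * s = c * s := by
  intro h
  have h0 := h 0 ⟨by linarith, hℓ⟩
  have h1 := h (ℓ / 2) ⟨by linarith, by linarith⟩
  have : ℓ / 2 * s = 0 := by rw [h1, ← h0, zero_mul]
  rcases mul_eq_zero.mp this with hℓ0 | hs0
  · linarith
  · exact hs hs0

theorem exists_mem_Ioo_sin_ne_zero {L : ℝ} (hL : 0 < L) {m : ℕ} (hm : 0 < m) :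
    ∃ a ∈ Ioo 0 L, sin ((m : ℝ) * π * a / L) ≠ 0 := by
  have hm' : (1 : ℝ) ≤ m := by exact_mod_cast hm
  refine ⟨L / (2 * m), ⟨by positivity, ?_⟩, ?_⟩
  · rw [div_lt_iff₀ (by positivity)]; nlinarith
  · have : (m : ℝ) * π * (L / (2 * m)) / L = π / 2 := by field_simp
    rw [this, sin_pi_div_two]; exact one_ne_zero

theorem stmt10 (L ℓ : ℝ) (hL : 0 < L) (hℓ : 0 < ℓ) (m : ℕ) (hm : 0 < m) :
    (∀ u ∈ ({fun x₁ _ => Real.sin ((m : ℝ) * Real.pi * x₁ / L),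
              fun x₁ x₂ => x₂ * Real.sin ((m : ℝ) * Real.pi * x₁ / L)} :
              Set (ℝ → ℝ → ℝ)),
      (∀ a b : ℝ, biharm u a b = ((m : ℝ) ^ 4 * Real.pi ^ 4 / L ^ 4) * u a b) ∧
      (∀ b : ℝ, u 0 b = 0 ∧ u L b = 0 ∧ pd1 (pd1 u) 0 b = 0 ∧ pd1 (pd1 u) L b = 0) ∧
      (∀ a b : ℝ, pd2 (pd2 u) a b = 0 ∧ pd2 (pd2 (pd2 u)) a b = 0)) ∧
    (∀ c : ℝ, ¬ (∀ a ∈ Set.Ioo (0 : ℝ) L, ∀ b ∈ Set.Ioo (-ℓ) ℓ,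
      b * Real.sin ((m : ℝ) * Real.pi * a / L) = c * Real.sin ((m : ℝ) * Real.pi * a / L))) := by
  refine ⟨fun u hu => ?_, fun c hc => ?_⟩
  · change SolvesEigen2 L _ u
    rcases hu with rfl | rfl
    · simpa using solvesEigen2_affine_mul_sin L 0 1 m
    · simpa using solvesEigen2_affine_mul_sin L 1 0 m
  · obtain ⟨a, ha, hsa⟩ := exists_mem_Ioo_sin_ne_zero hL hm
    exact not_forall_mul_eq_const_mul hℓ hsa c (hc a ha)
end
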